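/- Let M ≥ 3 be an odd integer, n ∈ {1,2}, and Θ̄ = (θ̄_1,…,θ̄_{M-1}) with θ̄_k := k n π / M. Then for every l ∈ {1,…,M-1}, 𝓗̄_l(Θ̄) = -2i sin(2θ̄_1) / ((1 + e^{-2iθ̄_1})(1 + e^{2iθ̄_1})) = 𝒦̄(Θ̄); equivalently, 𝓗̄_l(Θ̄)/𝒦̄(Θ̄) = 1 for every l ∈ {1,…,M-1}. -/

import Mathlib

open Complex Real Finset

noncomputable section

/-- The angles `θ̄_k = k n π / M`. -/
def thbar (M n : ℕ) (k : ℕ) : ℝ := (k : ℝ) * n * π / M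

/-- `𝒦̄(Θ)`, for angles `θ : ℕ → ℝ` (with `θ 0 = 0` understood). -/
def KbarN (M : ℕ) (θ : ℕ → ℝ) : ℂ :=
  (1 + (-1 : ℂ) ^ M) / 2 +
    (-1 : ℂ) ^ M * ∑ k ∈ Finset.Icc 1 (M - 1),
      (-1 : ℂ) ^ k * Complex.exp (-2 * Complex.I * (θ k : ℂ))

/-- `𝓗̄_l(Θ)`, for angles `θ : ℕ → ℝ` (with `θ 0 = 0` understood). -/
def HbarN (M : ℕ) (θ : ℕ → ℝ) (l : ℕ) : ℂ :=
  (1 - (-1 : ℂ) ^ M) / 2 +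
    (∑ k ∈ Finset.range l,
      (-1 : ℂ) ^ (l + k) * Complex.exp (2 * Complex.I * ((θ l - θ k : ℝ) : ℂ))) +
    (-1 : ℂ) ^ M * ∑ k ∈ Finset.Icc l (M - 1),
      (-1 : ℂ) ^ (l + k) * Complex.exp (2 * Complex.I * ((θ l - θ k : ℝ) : ℂ))

/-
With `θ_k = k φ` put `z = -e^{-2iφ}`. Every summand of `𝒦̄` and `𝓗̄_l` is then a power of `z`:
`𝒦̄ = -∑_{k=1}^{M-1} z^k` and `𝓗̄_l = 1 + z^{-l} (∑_{k<l} z^k - ∑_{k=l}^{M-1} z^k)` for odd `M`.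
If moreover `M φ ∈ π ℤ`, then `z^M = -1`, and summing the geometric series turns both into
`(z + 1)/(z - 1) = -i tan φ`, which is also the closed form in the statement. For `φ = θ̄_1 = nπ/M`
the ratio is `1` because `tan θ̄_1 ≠ 0`: `nπ/M` is not a multiple of `π/2`, as `M` is odd and
`M > n`.
-/

section GeometricSums

variable {K : Type*} [Field K] {M l : ℕ} {z : K}

theorem ne_one_of_pow_eq_neg_one [NeZero (2 : K)] (hzM : z ^ M = -1) : z ≠ 1 := by
  rintro rfl
  rw [one_pow, eq_neg_iff_add_eq_zero, one_add_one_eq_two] at hzM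
  exact two_ne_zero hzM

theorem neg_sum_Icc_one_pow_of_pow_eq_neg_one (hM : 0 < M) (hz1 : z ≠ 1) (hzM : z ^ M = -1) :
    -∑ k ∈ Icc 1 (M - 1), z ^ k = (z + 1) / (z - 1) := by
  have hz1' : z - 1 ≠ 0 := sub_ne_zero.mpr hz1
  rw [Icc_sub_one_right_eq_Ico_of_not_isMin (by simpa using hM.ne'), geom_sum_Ico hz1 hM, hzM,
    pow_one]
  field_simp
  ring

theorem one_add_sum_range_div_pow_sub_sum_Icc_div_pow (hM : 0 < M) (hl : l ≤ M) (hz1 : z ≠ 1)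
    (hzM : z ^ M = -1) :
    1 + ∑ k ∈ range l, z ^ k / z ^ l - ∑ k ∈ Icc l (M - 1), z ^ k / z ^ l = (z + 1) / (z - 1) := by
  have hz0 : z ≠ 0 := by rintro rfl; simp [hM.ne'] at hzM
  have hz1' : z - 1 ≠ 0 := sub_ne_zero.mpr hz1
  have hzl : z ^ l ≠ 0 := pow_ne_zero l hz0
  rw [← sum_div, ← sum_div, Icc_sub_one_right_eq_Ico_of_not_isMin (by simpa using hM.ne'),
    geom_sum_eq hz1, geom_sum_Ico hz1 hl, hzM]
  field_simp
  ring

end GeometricSums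

theorem cexp_two_mul_I_mul_eq_sq (φ : ℝ) :
    cexp (2 * I * φ) = (Real.cos φ + Real.sin φ * I) ^ 2 := by
  rw [ofReal_cos, ofReal_sin, ← exp_mul_I, ← Complex.exp_nat_mul]
  ring_nf

theorem cexp_neg_two_mul_I_mul_eq_sq (φ : ℝ) :
    cexp (-2 * I * φ) = (Real.cos φ - Real.sin φ * I) ^ 2 := by
  simpa [Real.cos_neg, Real.sin_neg, sub_eq_add_neg] using cexp_two_mul_I_mul_eq_sq (-φ)

theorem neg_cexp_neg_two_mul_I_add_one_div_sub_one (φ : ℝ) :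
    (-cexp (-2 * I * φ) + 1) / (-cexp (-2 * I * φ) - 1) = -I * Real.tan φ := by
  have hcs : (Real.cos φ : ℂ) ^ 2 + (Real.sin φ : ℂ) ^ 2 = 1 := by
    exact_mod_cast Real.cos_sq_add_sin_sq φ
  have hne : (Real.cos φ : ℂ) - Real.sin φ * I ≠ 0 := by
    have h : cexp (-φ * I) = Real.cos φ - Real.sin φ * I := by
      rw [exp_mul_I, Complex.cos_neg, Complex.sin_neg, ofReal_cos, ofReal_sin]; ring
    exact h ▸ Complex.exp_ne_zero _
  rw [cexp_neg_two_mul_I_mul_eq_sq, Real.tan_eq_sin_div_cos, ofReal_div]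
  generalize (Real.cos φ : ℂ) = c at *
  generalize (Real.sin φ : ℂ) = s at *
  calc (-(c - s * I) ^ 2 + 1) / (-(c - s * I) ^ 2 - 1)
      = (2 * s * I * (c - s * I)) / (-2 * c * (c - s * I)) := by
        congr 1
        · linear_combination -hcs + s ^ 2 * I_sq
        · linear_combination hcs - s ^ 2 * I_sq
    _ = 2 * s * I / (-2 * c) := mul_div_mul_right _ _ hne
    _ = -I * (s / c) := by ring

theorem neg_two_mul_I_mul_sin_two_mul_div (φ : ℝ) :
    -2 * I * (Real.sin (2 * φ) : ℂ) / ((1 + cexp (-2 * I * φ)) * (1 + cexp (2 * I * φ))) =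
      -I * Real.tan φ := by
  have hcs : (Real.cos φ : ℂ) ^ 2 + (Real.sin φ : ℂ) ^ 2 = 1 := by
    exact_mod_cast Real.cos_sq_add_sin_sq φ
  rw [cexp_neg_two_mul_I_mul_eq_sq, cexp_two_mul_I_mul_eq_sq, Real.sin_two_mul, Real.tan_eq_sin_div_cos]
  simp only [ofReal_mul, ofReal_div, ofReal_ofNat]
  generalize (Real.cos φ : ℂ) = c at *
  generalize (Real.sin φ : ℂ) = s at *
  have hden : (1 + (c - s * I) ^ 2) * (1 + (c + s * I) ^ 2) = 4 * c ^ 2 := by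
    calc (1 + (c - s * I) ^ 2) * (1 + (c + s * I) ^ 2)
        = 2 * c * (c - s * I) * (2 * c * (c + s * I)) := by
          congr 1 <;> linear_combination -hcs + s ^ 2 * I_sq
      _ = 4 * c ^ 2 := by linear_combination 4 * c ^ 2 * hcs - 4 * c ^ 2 * s ^ 2 * I_sq
  rw [hden]
  rcases eq_or_ne c 0 with rfl | hc
  · simp
  · field_simp
    ring

section LinearAngles

variable {M : ℕ} {θ : ℕ → ℝ} {φ : ℝ}

theorem neg_one_pow_mul_cexp_neg_two_mul_I (hθ : ∀ k, θ k = k * φ) (k : ℕ) :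
    (-1 : ℂ) ^ k * cexp (-2 * I * θ k) = (-cexp (-2 * I * φ)) ^ k := by
  rw [hθ, neg_pow (cexp _), ← Complex.exp_nat_mul]
  push_cast
  ring_nf

theorem neg_one_pow_add_mul_cexp_two_mul_I_sub (hθ : ∀ k, θ k = k * φ) (l k : ℕ) :
    (-1 : ℂ) ^ (l + k) * cexp (2 * I * ((θ l - θ k : ℝ) : ℂ)) =
      (-cexp (-2 * I * φ)) ^ k / (-cexp (-2 * I * φ)) ^ l := by
  rw [← neg_one_pow_mul_cexp_neg_two_mul_I hθ, ← neg_one_pow_mul_cexp_neg_two_mul_I hθ,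
    show 2 * I * ((θ l - θ k : ℝ) : ℂ) = -2 * I * θ k - -2 * I * θ l by push_cast; ring,
    Complex.exp_sub, pow_add]
  field_simp
  rw [← pow_mul, pow_mul', neg_one_sq, one_pow]

theorem neg_cexp_neg_two_mul_I_pow_of_odd (hM : Odd M) (hφ : ∃ m : ℤ, M * φ = m * π) :
    (-cexp (-2 * I * φ)) ^ M = -1 := by
  obtain ⟨m, hm⟩ := hφ
  have hm' : (M : ℂ) * φ = m * π := by exact_mod_cast hm
  have hexp : (M : ℂ) * (-2 * I * φ) = (-m : ℤ) * (2 * π * I) := by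
    push_cast
    linear_combination (-2 * I) * hm'
  rw [neg_pow, hM.neg_one_pow, ← Complex.exp_nat_mul, hexp, exp_int_mul_two_pi_mul_I, mul_one]

theorem KbarN_eq_neg_I_mul_tan (hM : Odd M) (hθ : ∀ k, θ k = k * φ) (hφ : ∃ m : ℤ, M * φ = m * π) :
    KbarN M θ = -I * Real.tan φ := by
  have hzM := neg_cexp_neg_two_mul_I_pow_of_odd hM hφ
  have hz1 := ne_one_of_pow_eq_neg_one hzM
  rw [KbarN, hM.neg_one_pow, sum_congr rfl fun k _ => neg_one_pow_mul_cexp_neg_two_mul_I hθ k,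
    ← neg_cexp_neg_two_mul_I_add_one_div_sub_one, ← neg_sum_Icc_one_pow_of_pow_eq_neg_one hM.pos hz1 hzM]
  ring

theorem HbarN_eq_neg_I_mul_tan (hM : Odd M) (hθ : ∀ k, θ k = k * φ) (hφ : ∃ m : ℤ, M * φ = m * π)
    {l : ℕ} (hl : l ≤ M) : HbarN M θ l = -I * Real.tan φ := by
  have hzM := neg_cexp_neg_two_mul_I_pow_of_odd hM hφ
  have hz1 := ne_one_of_pow_eq_neg_one hzM
  rw [HbarN, hM.neg_one_pow,
    sum_congr rfl fun k _ => neg_one_pow_add_mul_cexp_two_mul_I_sub hθ l k,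
    sum_congr rfl fun k _ => neg_one_pow_add_mul_cexp_two_mul_I_sub hθ l k,
    ← neg_cexp_neg_two_mul_I_add_one_div_sub_one,
    ← one_add_sum_range_div_pow_sub_sum_Icc_div_pow hM.pos hl hz1 hzM]
  ring

end LinearAngles

theorem thbar_eq_mul (M n k : ℕ) : thbar M n k = k * thbar M n 1 := by
  simp only [thbar, Nat.cast_one]
  ring

theorem natCast_mul_thbar_one {M : ℕ} (hM : M ≠ 0) (n : ℕ) : M * thbar M n 1 = n * π := by
  rw [thbar]
  field_simp
  ring

theorem tan_thbar_one_ne_zero {M n : ℕ} (hM : 3 ≤ M) (hModd : Odd M) (hn : n = 1 ∨ n = 2) :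
    Real.tan (thbar M n 1) ≠ 0 := by
  rw [Ne, Real.tan_eq_zero_iff]
  rintro ⟨k, hk⟩
  have hkM : (k : ℝ) * M = 2 * n := by
    rw [thbar] at hk
    field_simp at hk
    linear_combination hk
  have hkM' : k * M = 2 * n := by exact_mod_cast hkM
  rw [Nat.odd_iff] at hModd
  rcases lt_trichotomy k 1 with hk1 | rfl | hk1
  · have := mul_nonpos_of_nonpos_of_nonneg (by omega : k ≤ 0) (by omega : (0 : ℤ) ≤ M)
    omega
  · omega
  · have := mul_le_mul_of_nonneg_right (by omega : 2 ≤ k) (by omega : (0 : ℤ) ≤ M)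
    omega

theorem Hbar_at_thbar (M n : ℕ) (hM : 3 ≤ M) (hModd : Odd M) (hn : n = 1 ∨ n = 2) :
    ∀ l : ℕ, 1 ≤ l → l ≤ M - 1 →
      HbarN M (thbar M n) l =
          -2 * Complex.I * (Real.sin (2 * thbar M n 1) : ℂ) /
            ((1 + Complex.exp (-2 * Complex.I * (thbar M n 1 : ℂ))) *
              (1 + Complex.exp (2 * Complex.I * (thbar M n 1 : ℂ)))) ∧
        HbarN M (thbar M n) l = KbarN M (thbar M n) ∧
        HbarN M (thbar M n) l / KbarN M (thbar M n) = 1 := by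
  intro l _ hl
  have hφ : ∃ m : ℤ, (M : ℝ) * thbar M n 1 = m * π :=
    ⟨n, by rw [natCast_mul_thbar_one (by omega)]; norm_cast⟩
  have hH := HbarN_eq_neg_I_mul_tan hModd (thbar_eq_mul M n) hφ (l := l) (by omega)
  have hK := KbarN_eq_neg_I_mul_tan hModd (thbar_eq_mul M n) hφ
  refine ⟨by rw [hH, neg_two_mul_I_mul_sin_two_mul_div], by rw [hH, hK], ?_⟩
  rw [hH, hK, div_self (mul_ne_zero (neg_ne_zero.mpr I_ne_zero)
    (ofReal_ne_zero.mpr (tan_thbar_one_ne_zero hM hModd hn)))]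

end
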